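/- (Two-alphabet phase retrieval) Let N ≥ 1 and let α, β be real numbers such that α², β², αβ are linearly independent over ℚ. For signals x, x' ∈ {α, β}^N, with S_α(x) = {i : x[i] = α}, S_β(x) = {j : x[j] = β} and similarly for x', the following are equivalent: (i) a_x = a_{x'}; (ii) S_α(x) and S_α(x') are homometric; (iii) S_β(x) and S_β(x') are homometric; (iv) the ordered partitions (S_α(x), S_β(x)) and (S_α(x'), S_β(x')) are homometric. -/

import Mathlib

/-- The cyclic distance `d(i,j) = min(|i-j|, N-|i-j|)` on `ZMod N`. -/
def cdist {N : ℕ} (i j : ZMod N) : ℕ := min (i - j).val (j - i).val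

/-- The cyclic difference multiset `A - B = {d(i,j) : i ∈ A, j ∈ B}`. -/
def diffMS {N : ℕ} (A B : Finset (ZMod N)) : Multiset ℕ :=
  (A ×ˢ B).val.map fun p => cdist p.1 p.2

/-- The self difference multiset `A - A = {d(i,j) : i ≤ j ∈ A}`. -/
def selfDiffMS {N : ℕ} (A : Finset (ZMod N)) : Multiset ℕ :=
  ((A ×ˢ A).filter fun p => p.1.val ≤ p.2.val).val.map fun p => cdist p.1 p.2

/-- Two subsets are homometric if they have the same self difference multiset. -/
def Homometric {N : ℕ} (A B : Finset (ZMod N)) : Prop :=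
  selfDiffMS A = selfDiffMS B

/-- `σ : ZMod N → ZMod N` is given by the action of an element of the dihedral
group `D_{2N}`, generated by the rotation `i ↦ i + 1` and the reflection `i ↦ -i`. -/
def IsDihedral {N : ℕ} (σ : ZMod N → ZMod N) : Prop :=
  (∃ k : ZMod N, ∀ i, σ i = i + k) ∨ (∃ k : ZMod N, ∀ i, σ i = -i + k)

/-- Two subsets are equivalent if one is the image of the other under `D_{2N}`. -/
def EquivSets {N : ℕ} (A B : Finset (ZMod N)) : Prop :=
  ∃ σ : ZMod N → ZMod N, IsDihedral σ ∧ B = A.image σ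

/-- An ordered partition of `[0, N-1]`: pairwise disjoint sets covering everything. -/
def IsPartitionOf {N K : ℕ} [NeZero N] (A : Fin K → Finset (ZMod N)) : Prop :=
  (∀ i j, i ≠ j → Disjoint (A i) (A j)) ∧ Finset.univ.biUnion A = Finset.univ

/-- Two ordered partitions are homometric if `A i - A j = B i - B j` for all pairs. -/
def HomometricPart {N K : ℕ} (A B : Fin K → Finset (ZMod N)) : Prop :=
  ∀ i j, diffMS (A i) (A j) = diffMS (B i) (B j)

/-- Two ordered partitions are equivalent if a single dihedral element maps one to the other. -/
def EquivPart {N K : ℕ} (A B : Fin K → Finset (ZMod N)) : Prop :=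
  ∃ σ : ZMod N → ZMod N, IsDihedral σ ∧ ∀ i, B i = (A i).image σ

/-- Two ordered partitions are pseudo-equivalent if each part is mapped by some
(possibly different) dihedral element. -/
def PseudoEquivPart {N K : ℕ} (A B : Fin K → Finset (ZMod N)) : Prop :=
  ∀ i, ∃ σ : ZMod N → ZMod N, IsDihedral σ ∧ B i = (A i).image σ

/-- The periodic autocorrelation `a_x[ℓ] = ∑ x[n] x[n+ℓ]`. -/
noncomputable def autocorr {N : ℕ} [NeZero N] (x : ZMod N → ℝ) (ℓ : ZMod N) : ℝ :=
  ∑ n : ZMod N, x n * x (n + ℓ)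

open Classical in
/-- The level set `{i : x[i] = a}` of a signal. -/
noncomputable def levelSet {N : ℕ} [NeZero N] (x : ZMod N → ℝ) (a : ℝ) : Finset (ZMod N) :=
  Finset.univ.filter fun i => x i = a

/-!
Let `A` be the `α`-level set of `x`. Then `x = β + (α - β) • 1_A`, so
`a_x(ℓ) = N β² + 2β(α - β)|A| + (α - β)² c_A(ℓ)` with `c_A(ℓ) = #{i ∈ A | i + ℓ ∈ A}`, and the
genericity of `α, β` makes `a_x` determine `c_A`, i.e. the multiset `offsetMS A A` of offsets
`j - i ∈ ℤ/N`. Each of the other conditions is also equivalent to `offsetMS A A = offsetMS A' A'`: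
the cyclic distance is the offset up to sign and `offsetMS A A` is symmetric, so `A - A` determines
it; twice the self-difference multiset is `A - A` plus `|A|` zeros; and the `β`-level set is `Aᶜ`,
whose offset multisets are determined by those of `A` since
`offsetMS S T + offsetMS S Tᶜ = #S • ℤ/N`.
-/

open Finset

theorem Finset.val_map_eq_sum_singleton {ι α : Type*} (s : Finset ι) (f : ι → α) :
    s.val.map f = ∑ i ∈ s, {f i} :=
  (Multiset.sum_map_singleton _).symm.trans (by rw [Multiset.map_map]; rfl)

theorem Multiset.count_map_eq_ite_of_map_neg_eq {G β : Type*} [InvolutiveNeg G] [DecidableEq G]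
    [DecidableEq β] {f : G → β} (hf : ∀ a b, f a = f b ↔ a = b ∨ a = -b) {s : Multiset G}
    (hs : s.map Neg.neg = s) (a : G) :
    (s.map f).count (f a) = if a = -a then s.count a else 2 * s.count a := by
  have hneg : s.count (-a) = s.count a := by
    conv_lhs => rw [← hs]
    exact count_map_eq_count' _ _ neg_injective a
  have hsplit := filter_add_filter (Eq a) (Eq (-a)) s
  rw [filter_eq, filter_eq, hneg] at hsplit
  rw [count_map, filter_congr fun b _ => (hf a b).trans (or_congr Iff.rfl neg_eq_iff_eq_neg.symm)]
  split_ifs with ha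
  · rw [← ha, count_eq_card_filter_eq]
    simp only [or_self]
  · rw [(filter_eq_nil (p := fun b => a = b ∧ -a = b)).2 fun b _ hb => ha (hb.1.trans hb.2.symm),
      add_zero] at hsplit
    rw [← hsplit, card_add, card_replicate, card_replicate, two_mul]

theorem Multiset.eq_of_map_eq_of_map_neg_eq {G β : Type*} [InvolutiveNeg G] [DecidableEq G]
    [DecidableEq β] {f : G → β} (hf : ∀ a b, f a = f b ↔ a = b ∨ a = -b) {s t : Multiset G}
    (hs : s.map Neg.neg = s) (ht : t.map Neg.neg = t) (h : s.map f = t.map f) : s = t := by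
  ext a
  have := congrArg (count (f a)) h
  rw [count_map_eq_ite_of_map_neg_eq hf hs, count_map_eq_ite_of_map_neg_eq hf ht] at this
  split_ifs at this <;> omega

theorem LinearIndependent.eq_zero_of_int_combination {u v w : ℝ}
    (h : LinearIndependent ℚ ![u, v, w]) {p q r : ℤ} (hpqr : p * u + q * v + r * w = 0) :
    p = 0 ∧ q = 0 ∧ r = 0 := by
  rw [Fintype.linearIndependent_iff] at h
  have hzero := h ![p, q, r] (by simpa [Fin.sum_univ_three, Rat.smul_def] using hpqr)
  exact ⟨by simpa using hzero 0, by simpa using hzero 1, by simpa using hzero 2⟩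

theorem ne_of_linearIndependent_sq {α β : ℝ}
    (hgen : LinearIndependent ℚ ![α ^ 2, β ^ 2, α * β]) : α ≠ β := by
  rintro rfl
  exact one_ne_zero
    (hgen.eq_zero_of_int_combination (p := 1) (q := -1) (r := 0) (by push_cast; ring)).1

section

variable {N : ℕ}

theorem cdist_comm (i j : ZMod N) : cdist i j = cdist j i := min_comm _ _

theorem cdist_self (i : ZMod N) : cdist i i = 0 := by simp [cdist]

theorem cdist_eq_natAbs_valMinAbs [NeZero N] (i j : ZMod N) :
    cdist i j = (j - i).valMinAbs.natAbs := by
  rw [cdist, ZMod.valMinAbs_natAbs_eq_min, ← neg_sub, ZMod.neg_val]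
  split_ifs with h
  · simp [h]
  · exact min_comm _ _

theorem diffMS_eq_sum (S T : Finset (ZMod N)) :
    diffMS S T = ∑ i ∈ S, ∑ j ∈ T, {cdist i j} := by
  rw [diffMS, Finset.val_map_eq_sum_singleton, sum_product]

theorem card_diffMS (S T : Finset (ZMod N)) : Multiset.card (diffMS S T) = #S * #T := by
  rw [diffMS, Multiset.card_map, ← Finset.card_def, Finset.card_product]

theorem selfDiffMS_add_selfDiffMS [NeZero N] (A : Finset (ZMod N)) :
    selfDiffMS A + selfDiffMS A = diffMS A A + Multiset.replicate #A 0 := by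
  have hself : selfDiffMS A =
      ∑ i ∈ A, ∑ j ∈ A, if i.val ≤ j.val then {cdist i j} else 0 := by
    rw [selfDiffMS, Finset.val_map_eq_sum_singleton, sum_filter, sum_product]
  have hpair (i j : ZMod N) :
      ((if i.val ≤ j.val then {cdist i j} else 0) + if j.val ≤ i.val then {cdist j i} else 0) =
        ({cdist i j} + if i = j then {cdist i j} else 0 : Multiset ℕ) := by
    rw [cdist_comm j i]
    by_cases hij : i = j
    · simp [hij]
    · have hval : i.val ≠ j.val := fun h => hij (ZMod.val_injective N h)
      rcases Nat.lt_or_gt_of_ne hval with h | h <;> simp [h.le, h.not_ge, hij]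
  calc selfDiffMS A + selfDiffMS A
      = ∑ i ∈ A, ∑ j ∈ A, ((if i.val ≤ j.val then {cdist i j} else 0) +
          if j.val ≤ i.val then {cdist j i} else 0) := by
        rw [hself]
        nth_rewrite 2 [sum_comm]
        simp only [← sum_add_distrib]
    _ = ∑ i ∈ A, ∑ j ∈ A, ({cdist i j} + if i = j then {cdist i j} else 0) := by
        simp only [hpair]
    _ = diffMS A A + Multiset.replicate #A 0 := by
        simp only [sum_add_distrib, sum_ite_eq, diffMS_eq_sum, cdist_self, sum_ite_mem,
          inter_self, sum_const, Multiset.nsmul_singleton]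

theorem homometric_iff_diffMS_eq [NeZero N] (A B : Finset (ZMod N)) :
    Homometric A B ↔ diffMS A A = diffMS B B := by
  unfold Homometric
  have hA := selfDiffMS_add_selfDiffMS A
  have hB := selfDiffMS_add_selfDiffMS B
  constructor
  · intro h
    have hcard : #A = #B := by
      have := congrArg Multiset.card (hA.symm.trans (h ▸ hB))
      simp only [Multiset.card_add, card_diffMS, Multiset.card_replicate] at this
      nlinarith
    rw [h, hcard] at hA
    exact add_right_cancel (hA.symm.trans hB)
  · intro h
    have hcard : #A = #B := by
      simpa only [card_diffMS, Nat.mul_self_inj] using congrArg Multiset.card h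
    rw [← h, ← hcard, ← hA] at hB
    ext d
    have := congrArg (Multiset.count d) hB
    simp only [Multiset.count_add] at this
    omega

def offsetMS (S T : Finset (ZMod N)) : Multiset (ZMod N) :=
  (S ×ˢ T).val.map fun p => p.2 - p.1

theorem offsetMS_eq_sum (S T : Finset (ZMod N)) :
    offsetMS S T = ∑ i ∈ S, ∑ j ∈ T, {j - i} := by
  rw [offsetMS, Finset.val_map_eq_sum_singleton, sum_product]

theorem card_offsetMS (S T : Finset (ZMod N)) : Multiset.card (offsetMS S T) = #S * #T := by
  rw [offsetMS, Multiset.card_map, ← Finset.card_def, Finset.card_product]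

theorem count_offsetMS (S T : Finset (ZMod N)) (ℓ : ZMod N) :
    (offsetMS S T).count ℓ = #{i ∈ S | i + ℓ ∈ T} := by
  simp only [offsetMS_eq_sum, Multiset.count_sum', Multiset.count_singleton, eq_sub_iff_add_eq',
    sum_ite_eq, card_filter]

theorem offsetMS_map_neg_self (A : Finset (ZMod N)) :
    (offsetMS A A).map Neg.neg = offsetMS A A := by
  conv_lhs => rw [offsetMS, Multiset.map_map, ← map_swap_product, Finset.map_val,
    Multiset.map_map]
  exact Multiset.map_congr rfl fun p _ => neg_sub _ _

theorem diffMS_eq_map_offsetMS [NeZero N] (S T : Finset (ZMod N)) :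
    diffMS S T = (offsetMS S T).map fun m => m.valMinAbs.natAbs := by
  simp only [diffMS, offsetMS, Multiset.map_map, Function.comp_def, cdist_eq_natAbs_valMinAbs]

theorem diffMS_self_eq_iff [NeZero N] (A B : Finset (ZMod N)) :
    diffMS A A = diffMS B B ↔ offsetMS A A = offsetMS B B := by
  rw [diffMS_eq_map_offsetMS, diffMS_eq_map_offsetMS]
  exact ⟨Multiset.eq_of_map_eq_of_map_neg_eq (fun _ _ => ZMod.natAbs_valMinAbs_eq_natAbs_valMinAbs)
    (offsetMS_map_neg_self A) (offsetMS_map_neg_self B), congrArg _⟩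

theorem homometric_iff_offsetMS_eq [NeZero N] (A B : Finset (ZMod N)) :
    Homometric A B ↔ offsetMS A A = offsetMS B B :=
  (homometric_iff_diffMS_eq A B).trans (diffMS_self_eq_iff A B)

theorem offsetMS_add_offsetMS_compl [NeZero N] (S T : Finset (ZMod N)) :
    offsetMS S T + offsetMS S Tᶜ = #S • (univ : Finset (ZMod N)).val := by
  have (i : ZMod N) : ∑ j, ({j - i} : Multiset (ZMod N)) = univ.val := by
    rw [← Finset.val_map_eq_sum_singleton]
    exact Multiset.map_univ_val_equiv (Equiv.subRight i)
  simp only [offsetMS_eq_sum, ← sum_add_distrib, sum_add_sum_compl, this, sum_const]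

theorem offsetMS_add_offsetMS_compl_left [NeZero N] (S T : Finset (ZMod N)) :
    offsetMS S T + offsetMS Sᶜ T = #T • (univ : Finset (ZMod N)).val := by
  have (j : ZMod N) : ∑ i, ({j - i} : Multiset (ZMod N)) = univ.val := by
    rw [← Finset.val_map_eq_sum_singleton]
    exact Multiset.map_univ_val_equiv (Equiv.subLeft j)
  rw [offsetMS_eq_sum, offsetMS_eq_sum, sum_add_sum_compl, sum_comm]
  simp only [this, sum_const]

theorem card_eq_of_offsetMS_eq {A B : Finset (ZMod N)} (h : offsetMS A A = offsetMS B B) :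
    #A = #B := by
  simpa only [card_offsetMS, Nat.mul_self_inj] using congrArg Multiset.card h

theorem offsetMS_compl_eq_of_offsetMS_eq [NeZero N] {A B : Finset (ZMod N)}
    (h : offsetMS A A = offsetMS B B) :
    offsetMS A Aᶜ = offsetMS B Bᶜ ∧ offsetMS Aᶜ A = offsetMS Bᶜ B ∧
      offsetMS Aᶜ Aᶜ = offsetMS Bᶜ Bᶜ := by
  have hcard := card_eq_of_offsetMS_eq h
  have hcard_compl : #Aᶜ = #Bᶜ := by rw [card_compl, card_compl, hcard]
  have hright : offsetMS A Aᶜ = offsetMS B Bᶜ := by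
    have := offsetMS_add_offsetMS_compl A A
    rwa [h, hcard, ← offsetMS_add_offsetMS_compl B B, add_right_inj] at this
  refine ⟨hright, ?_, ?_⟩
  · have := offsetMS_add_offsetMS_compl_left A A
    rwa [h, hcard, ← offsetMS_add_offsetMS_compl_left B B, add_right_inj] at this
  · have := offsetMS_add_offsetMS_compl_left A Aᶜ
    rwa [hright, hcard_compl, ← offsetMS_add_offsetMS_compl_left B Bᶜ, add_right_inj] at this

theorem offsetMS_compl_self_eq_iff [NeZero N] (A B : Finset (ZMod N)) :
    offsetMS Aᶜ Aᶜ = offsetMS Bᶜ Bᶜ ↔ offsetMS A A = offsetMS B B :=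
  ⟨fun h => by simpa only [compl_compl] using (offsetMS_compl_eq_of_offsetMS_eq h).2.2,
    fun h => (offsetMS_compl_eq_of_offsetMS_eq h).2.2⟩

theorem homometricPart_compl_iff [NeZero N] (A B : Finset (ZMod N)) :
    HomometricPart ![A, Aᶜ] ![B, Bᶜ] ↔ offsetMS A A = offsetMS B B := by
  refine ⟨fun h => (diffMS_self_eq_iff A B).1 (h 0 0), fun h i j => ?_⟩
  obtain ⟨h01, h10, h11⟩ := offsetMS_compl_eq_of_offsetMS_eq h
  fin_cases i <;> fin_cases j <;>
    simp only [diffMS_eq_map_offsetMS, Fin.zero_eta, Fin.mk_one, Matrix.cons_val_zero,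
      Matrix.cons_val_one, h, h01, h10, h11]

theorem autocorr_ite [NeZero N] (A : Finset (ZMod N)) (α β : ℝ) (ℓ : ZMod N) :
    autocorr (fun n => if n ∈ A then α else β) ℓ =
      N * β ^ 2 + 2 * β * (α - β) * #A + (α - β) ^ 2 * (offsetMS A A).count ℓ := by
  set a : ZMod N → ℝ := fun n => if n ∈ A then 1 else 0 with ha
  have hx (n : ZMod N) : (if n ∈ A then α else β) = β + (α - β) * a n := by
    simp only [ha]; split_ifs <;> ring
  have hsum : ∑ n, a n = #A := by
    simp only [ha, sum_boole, filter_mem_eq_inter, univ_inter]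
  have hshift : ∑ n, a (n + ℓ) = #A := by
    rw [← hsum]; exact Equiv.sum_comp (Equiv.addRight ℓ) a
  have hprod : ∑ n, a n * a (n + ℓ) = (offsetMS A A).count ℓ := by
    simp only [ha, ite_mul, one_mul, zero_mul, sum_ite_mem, univ_inter, sum_boole,
      count_offsetMS]
  calc autocorr (fun n => if n ∈ A then α else β) ℓ
      = ∑ n, (β ^ 2 + β * (α - β) * a (n + ℓ) + β * (α - β) * a n
          + (α - β) ^ 2 * (a n * a (n + ℓ))) :=
        sum_congr rfl fun n _ => by beta_reduce; rw [hx n, hx (n + ℓ)]; ring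
    _ = _ := by
        simp only [sum_add_distrib, ← mul_sum, hsum, hshift, hprod, sum_const, card_univ,
          ZMod.card, nsmul_eq_mul]
        ring

theorem autocorr_ite_eq_iff [NeZero N] {α β : ℝ}
    (hgen : LinearIndependent ℚ ![α ^ 2, β ^ 2, α * β]) (A B : Finset (ZMod N)) :
    autocorr (fun n => if n ∈ A then α else β) = autocorr (fun n => if n ∈ B then α else β) ↔
      offsetMS A A = offsetMS B B := by
  constructor
  · intro h
    ext ℓ
    have hℓ := congrFun h ℓ
    rw [autocorr_ite, autocorr_ite] at hℓ
    set c := (offsetMS A A).count ℓ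
    set c' := (offsetMS B B).count ℓ
    -- the coefficient of `α ^ 2` in the difference of the two sides is `c - c'`
    have := (hgen.eq_zero_of_int_combination (p := c - c') (q := c - c' - 2 * (#A - #B))
      (r := 2 * (#A - #B) - 2 * (c - c')) (by push_cast; linear_combination hℓ)).1
    omega
  · intro h
    funext ℓ
    rw [autocorr_ite, autocorr_ite, h, card_eq_of_offsetMS_eq h]

theorem mem_levelSet [NeZero N] {x : ZMod N → ℝ} {a : ℝ} {n : ZMod N} :
    n ∈ levelSet x a ↔ x n = a := by
  simp [levelSet]

theorem eq_ite_levelSet [NeZero N] {x : ZMod N → ℝ} {α β : ℝ} (hx : ∀ n, x n = α ∨ x n = β) :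
    x = fun n => if n ∈ levelSet x α then α else β := by
  funext n
  rcases hx n with h | h <;> by_cases hn : n ∈ levelSet x α <;> simp_all [mem_levelSet]

theorem levelSet_eq_compl [NeZero N] {x : ZMod N → ℝ} {α β : ℝ} (hx : ∀ n, x n = α ∨ x n = β)
    (hαβ : α ≠ β) : levelSet x β = (levelSet x α)ᶜ := by
  ext n
  rw [mem_compl, mem_levelSet, mem_levelSet]
  rcases hx n with h | h <;> simp [h, hαβ, hαβ.symm]

end

/-- two-alphabet phase retrieval: for generic `α, β`, the four
conditions (i)-(iv) are equivalent. -/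
theorem two_alphabet_phase_retrieval (N : ℕ) [NeZero N] (α β : ℝ)
    (hgen : LinearIndependent ℚ ![α ^ 2, β ^ 2, α * β])
    (x x' : ZMod N → ℝ)
    (hx : ∀ n, x n = α ∨ x n = β) (hx' : ∀ n, x' n = α ∨ x' n = β) :
    (autocorr x = autocorr x' ↔ Homometric (levelSet x α) (levelSet x' α)) ∧
    (autocorr x = autocorr x' ↔ Homometric (levelSet x β) (levelSet x' β)) ∧
    (autocorr x = autocorr x' ↔
      HomometricPart ![levelSet x α, levelSet x β] ![levelSet x' α, levelSet x' β]) := by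
  have hαβ := ne_of_linearIndependent_sq hgen
  have hauto : autocorr x = autocorr x' ↔
      offsetMS (levelSet x α) (levelSet x α) = offsetMS (levelSet x' α) (levelSet x' α) := by
    have := autocorr_ite_eq_iff hgen (levelSet x α) (levelSet x' α)
    rwa [← eq_ite_levelSet hx, ← eq_ite_levelSet hx'] at this
  rw [levelSet_eq_compl hx hαβ, levelSet_eq_compl hx' hαβ, homometric_iff_offsetMS_eq,
    homometric_iff_offsetMS_eq, offsetMS_compl_self_eq_iff, homometricPart_compl_iff]
  exact ⟨hauto, hauto, hauto⟩
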